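/- Let X be an infinite-dimensional ω-categorical separable real Banach space. Then closedAge(X) has the ω-amalgamation property: for every finite-dimensional normed space E finitely representable in X, every C > 0, every ε > 0, every sequence (Fₙ)ₙ∈ℕ of finite-dimensional normed spaces finitely representable in X and every sequence (fₙ)ₙ∈ℕ with fₙ ∈ Emb_C(E, Fₙ), there exist n ≠ m, a finite-dimensional normed space G finitely representable in X, and isometric embeddings gₙ ∈ Emb(Fₙ, G) and g_m ∈ Emb(F_m, G) such that ‖gₙ∘fₙ − g_m∘f_m‖ < ε. -/

import Mathlib

/-!
Finite representability upgrades to an isometric embedding: almost isometric copies `T p` of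
`F` in `X`, moved by automorphisms of `X` into nearly the same position (the finite ε-nets of
ω-categoricity give pairwise close subsequences), form a Cauchy sequence whose limit is an
isometry. Once every `F n` sits isometrically in `X` via `V n`, the operators `V n ∘ f n` are
uniformly bounded, so pigeonholing them in a finite net of a basis of `E` gives `n ≠ m` and
`U ∈ Iso(X)` with `V n ∘ f n ≈ U ∘ V m ∘ f m`; the span of the ranges of `V n` and `U ∘ V m`
is the amalgam.
-/

noncomputable section

open Real Metric

/-- A bundled finite-dimensional real normed space. -/
structure FinNormedSpace where
  carrier : Type
  [grp : NormedAddCommGroup carrier]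
  [mod : NormedSpace ℝ carrier]
  [fd : FiniteDimensional ℝ carrier]

attribute [instance] FinNormedSpace.grp FinNormedSpace.mod FinNormedSpace.fd

instance : CoeSort FinNormedSpace Type := ⟨FinNormedSpace.carrier⟩

/-- `T ∈ Emb_C(E, F)`. -/
def IsEmbC {E F : Type*} [NormedAddCommGroup E] [NormedSpace ℝ E]
    [NormedAddCommGroup F] [NormedSpace ℝ F] (C : ℝ) (T : E →L[ℝ] F) : Prop :=
  ∀ x : E, Real.exp (-C) * ‖x‖ ≤ ‖T x‖ ∧ ‖T x‖ ≤ Real.exp C * ‖x‖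

/-- `T ∈ Emb(E, F)`, i.e. `T` is a linear isometric embedding. -/
def IsIsomEmb {E F : Type*} [NormedAddCommGroup E] [NormedSpace ℝ E]
    [NormedAddCommGroup F] [NormedSpace ℝ F] (T : E →L[ℝ] F) : Prop :=
  ∀ x : E, ‖T x‖ = ‖x‖

/-- The continuous linear map underlying a surjective linear isometry. -/
def toCLM {X Y : Type*} [NormedAddCommGroup X] [NormedSpace ℝ X]
    [NormedAddCommGroup Y] [NormedSpace ℝ Y] (T : X ≃ₗᵢ[ℝ] Y) : X →L[ℝ] Y :=
  T.toLinearIsometry.toContinuousLinearMap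

/-- `F` is finitely representable in `X`. -/
def FinRep (F : FinNormedSpace) (X : Type*) [NormedAddCommGroup X]
    [NormedSpace ℝ X] : Prop :=
  ∀ ε : ℝ, 0 < ε → ∃ T : F.carrier →L[ℝ] X, IsEmbC ε T

/-- The inclusion of a submodule into a larger one, as a continuous linear map. -/
def inclCLM {X : Type*} [NormedAddCommGroup X] [NormedSpace ℝ X]
    {E F : Submodule ℝ X} (h : E ≤ F) : E →L[ℝ] F :=
  (Submodule.subtypeL E).codRestrict F (fun x => h x.2)

/-- `X` is ω-categorical (ε-net formulation of compactness of
`(B_X)^n ⫽ Iso(X)`). -/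
def OmegaCategorical (X : Type*) [NormedAddCommGroup X] [NormedSpace ℝ X] : Prop :=
  ∀ n : ℕ, ∀ ε : ℝ, 0 < ε →
    ∃ S : Set (Fin n → X), S.Finite ∧ (∀ x ∈ S, ∀ i, ‖x i‖ ≤ 1) ∧
      ∀ y : Fin n → X, (∀ i, ‖y i‖ ≤ 1) →
        ∃ x ∈ S, ∃ T : X ≃ₗᵢ[ℝ] X, ∀ i, ‖y i - T (x i)‖ < ε

open Filter Topology

section Embeddings

variable {E F G : Type*} [NormedAddCommGroup E] [NormedSpace ℝ E]
  [NormedAddCommGroup F] [NormedSpace ℝ F] [NormedAddCommGroup G] [NormedSpace ℝ G]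

theorem IsEmbC.opNorm_le {C : ℝ} {T : E →L[ℝ] F} (hT : IsEmbC C T) : ‖T‖ ≤ Real.exp C :=
  T.opNorm_le_bound (Real.exp_pos C).le fun x => (hT x).2

theorem IsIsomEmb.isEmbC {T : E →L[ℝ] F} (hT : IsIsomEmb T) {C : ℝ} (hC : 0 ≤ C) :
    IsEmbC C T := fun x => by
  rw [hT x]
  exact ⟨mul_le_of_le_one_left (norm_nonneg x) (Real.exp_le_one_iff.2 (neg_nonpos.2 hC)),
    le_mul_of_one_le_left (norm_nonneg x) (Real.one_le_exp_iff.2 hC)⟩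

theorem isIsomEmb_toCLM (U : F ≃ₗᵢ[ℝ] F) : IsIsomEmb (toCLM U) := U.norm_map

theorem IsIsomEmb.comp {ι : F →L[ℝ] G} {T : E →L[ℝ] F} (hι : IsIsomEmb ι) (hT : IsIsomEmb T) :
    IsIsomEmb (ι.comp T) := fun x => (hι (T x)).trans (hT x)

theorem IsIsomEmb.of_comp {ι : F →L[ℝ] G} {T : E →L[ℝ] F} (hι : IsIsomEmb ι)
    (h : IsIsomEmb (ι.comp T)) : IsIsomEmb T := fun x => (hι (T x)).symm.trans (h x)

theorem IsEmbC.isIsomEmb_comp {C : ℝ} {ι : F →L[ℝ] G} {T : E →L[ℝ] F} (hι : IsIsomEmb ι)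
    (hT : IsEmbC C T) : IsEmbC C (ι.comp T) := fun x => by
  simpa only [ContinuousLinearMap.comp_apply, hι (T x)] using hT x

theorem IsIsomEmb.norm_comp {ι : F →L[ℝ] G} (hι : IsIsomEmb ι) (T : E →L[ℝ] F) :
    ‖ι.comp T‖ = ‖T‖ :=
  le_antisymm
    ((ι.opNorm_comp_le T).trans (mul_le_of_le_one_left (norm_nonneg T)
      (ι.opNorm_le_bound zero_le_one fun x => by rw [hι x, one_mul])))
    (T.opNorm_le_bound (norm_nonneg _) fun x => by
      rw [← hι (T x)]
      exact (ι.comp T).le_opNorm x)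

theorem isIsomEmb_of_tendsto {S : ℕ → E →L[ℝ] F} {c : ℕ → ℝ} {T : E →L[ℝ] F}
    (hS : ∀ p, IsEmbC (c p) (S p)) (hc : Tendsto c atTop (𝓝 0))
    (hST : Tendsto S atTop (𝓝 T)) : IsIsomEmb T := fun x => by
  have hlim : Tendsto (fun p => ‖S p x‖) atTop (𝓝 ‖T x‖) :=
    (((continuous_eval_const x).tendsto T).comp hST).norm
  have hlo : Tendsto (fun p => Real.exp (-c p) * ‖x‖) atTop (𝓝 ‖x‖) := by
    simpa using (hc.neg.rexp).mul_const ‖x‖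
  have hhi : Tendsto (fun p => Real.exp (c p) * ‖x‖) atTop (𝓝 ‖x‖) := by
    simpa using hc.rexp.mul_const ‖x‖
  exact tendsto_nhds_unique hlim
    (tendsto_of_tendsto_of_tendsto_of_le_of_le hlo hhi (fun p => (hS p x).1) fun p => (hS p x).2)

end Embeddings

/-- A copy of `Fin d → ℝ` free of its sup norm, to carry a norm induced from elsewhere. -/
def FinrankModel (d : ℕ) : Type := Fin d → ℝ

theorem exists_finNormedSpace_linearIsometryEquiv (P : Type*) [NormedAddCommGroup P]
    [NormedSpace ℝ P] [FiniteDimensional ℝ P] : ∃ G : FinNormedSpace, Nonempty (G ≃ₗᵢ[ℝ] P) := by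
  let d := Module.finrank ℝ P
  let : AddCommGroup (FinrankModel d) := inferInstanceAs (AddCommGroup (Fin d → ℝ))
  let : Module ℝ (FinrankModel d) := inferInstanceAs (Module ℝ (Fin d → ℝ))
  let e : FinrankModel d ≃ₗ[ℝ] P := (Module.finBasis ℝ P).equivFun.symm
  let : NormedAddCommGroup (FinrankModel d) := NormedAddCommGroup.induced _ _ e e.injective
  let : NormedSpace ℝ (FinrankModel d) := NormedSpace.induced ℝ _ _ e
  let : FiniteDimensional ℝ (FinrankModel d) := Module.Finite.equiv e.symm
  exact ⟨⟨FinrankModel d⟩, ⟨{ e with norm_map' := fun _ => rfl }⟩⟩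

theorem exists_finNormedSpace_factor {X F₁ F₂ : Type*} [NormedAddCommGroup X] [NormedSpace ℝ X]
    [NormedAddCommGroup F₁] [NormedSpace ℝ F₁] [FiniteDimensional ℝ F₁]
    [NormedAddCommGroup F₂] [NormedSpace ℝ F₂] [FiniteDimensional ℝ F₂]
    (A₁ : F₁ →L[ℝ] X) (A₂ : F₂ →L[ℝ] X) :
    ∃ (G : FinNormedSpace) (ι : G →L[ℝ] X) (g₁ : F₁ →L[ℝ] G) (g₂ : F₂ →L[ℝ] G),
      IsIsomEmb ι ∧ ι.comp g₁ = A₁ ∧ ι.comp g₂ = A₂ := by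
  let P := LinearMap.range (A₁ : F₁ →ₗ[ℝ] X) ⊔ LinearMap.range (A₂ : F₂ →ₗ[ℝ] X)
  obtain ⟨G, ⟨e⟩⟩ := exists_finNormedSpace_linearIsometryEquiv P
  have h₁ : ∀ z, A₁ z ∈ P := fun z => Submodule.mem_sup_left (LinearMap.mem_range_self _ z)
  have h₂ : ∀ z, A₂ z ∈ P := fun z => Submodule.mem_sup_right (LinearMap.mem_range_self _ z)
  refine ⟨G, P.subtypeL.comp (toCLM e), (toCLM e.symm).comp (A₁.codRestrict P h₁),
    (toCLM e.symm).comp (A₂.codRestrict P h₂), fun x => e.norm_map x, ?_, ?_⟩ <;>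
  · ext z
    simp [toCLM]

namespace OmegaCategorical

variable {X : Type*} [NormedAddCommGroup X] [NormedSpace ℝ X]

theorem exists_finite_net (hcat : OmegaCategorical X) (k : ℕ) (R : ℝ) {δ : ℝ} (hδ : 0 < δ) :
    ∃ S : Set (Fin k → X), S.Finite ∧ ∀ y : Fin k → X, (∀ i, ‖y i‖ ≤ R) →
      ∃ x ∈ S, ∃ T : X ≃ₗᵢ[ℝ] X, ∀ i, ‖y i - T (x i)‖ < δ := by
  set r := max R 1
  have hr : 0 < r := lt_max_of_lt_right one_pos
  obtain ⟨S, hS, -, hnet⟩ := hcat k (δ / r) (div_pos hδ hr)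
  refine ⟨(r • ·) '' S, hS.image _, fun y hy => ?_⟩
  obtain ⟨x, hx, T, hT⟩ := hnet (r⁻¹ • y) fun i => by
    rw [Pi.smul_apply, norm_smul, Real.norm_of_nonneg (inv_nonneg.2 hr.le), inv_mul_le_one₀ hr]
    exact (hy i).trans (le_max_left R 1)
  refine ⟨r • x, Set.mem_image_of_mem _ hx, T, fun i => ?_⟩
  have hscale : y i - T ((r • x) i) = r • ((r⁻¹ • y) i - T (x i)) := by
    simp only [Pi.smul_apply, map_smul, smul_sub, smul_inv_smul₀ hr.ne']
  calc ‖y i - T ((r • x) i)‖ = r * ‖(r⁻¹ • y) i - T (x i)‖ := by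
        rw [hscale, norm_smul, Real.norm_of_nonneg hr.le]
    _ < r * (δ / r) := mul_lt_mul_of_pos_left (hT i) hr
    _ = δ := mul_div_cancel₀ δ hr.ne'

theorem exists_infinite_pairwise_close (hcat : OmegaCategorical X) {k : ℕ} {R δ : ℝ}
    (hδ : 0 < δ) (x : ℕ → Fin k → X) (hx : ∀ p i, ‖x p i‖ ≤ R) {I : Set ℕ} (hI : I.Infinite) :
    ∃ B ⊆ I, B.Infinite ∧ ∀ q ∈ B, ∀ q' ∈ B,
      ∃ U : X ≃ₗᵢ[ℝ] X, ∀ i, ‖x q i - U (x q' i)‖ < δ := by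
  obtain ⟨S, hS, hnet⟩ := hcat.exists_finite_net k R (half_pos hδ)
  choose c hcS T hT using fun p => hnet (x p) (hx p)
  obtain ⟨s, -, hs⟩ : ∃ s ∈ S, (I ∩ c ⁻¹' {s}).Infinite := by
    by_contra! h
    exact hI ((hS.biUnion h).subset fun q hq => Set.mem_biUnion (hcS q) ⟨hq, rfl⟩)
  refine ⟨I ∩ c ⁻¹' {s}, Set.inter_subset_left, hs, ?_⟩
  rintro q ⟨-, hq⟩ q' ⟨-, hq'⟩
  refine ⟨(T q').symm.trans (T q), fun i => ?_⟩
  have hmid : ‖T q (c q i) - T q ((T q').symm (x q' i))‖ = ‖x q' i - T q' (c q' i)‖ := by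
    rw [← dist_eq_norm, (T q).dist_map, ← (T q').dist_map, LinearIsometryEquiv.apply_symm_apply,
      hq.trans hq'.symm, dist_comm, dist_eq_norm]
  calc ‖x q i - ((T q').symm.trans (T q)) (x q' i)‖
      ≤ ‖x q i - T q (c q i)‖ + ‖T q (c q i) - T q ((T q').symm (x q' i))‖ :=
        norm_sub_le_norm_sub_add_norm_sub _ _ _
    _ = ‖x q i - T q (c q i)‖ + ‖x q' i - T q' (c q' i)‖ := by rw [hmid]
    _ < δ / 2 + δ / 2 := add_lt_add (hT q i) (hT q' i)
    _ = δ := add_halves δ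

theorem exists_infinite_pairwise_close_clm (hcat : OmegaCategorical X) {E : Type*}
    [NormedAddCommGroup E] [NormedSpace ℝ E] [FiniteDimensional ℝ E] {M δ : ℝ} (hδ : 0 < δ)
    (A : ℕ → E →L[ℝ] X) (hA : ∀ p, ‖A p‖ ≤ M) {I : Set ℕ} (hI : I.Infinite) :
    ∃ B ⊆ I, B.Infinite ∧ ∀ q ∈ B, ∀ q' ∈ B,
      ∃ U : X ≃ₗᵢ[ℝ] X, ‖A q - (toCLM U).comp (A q')‖ < δ := by
  let b := Module.finBasis ℝ E
  obtain ⟨K, hK, hbasis⟩ := b.exists_opNorm_le (F := X)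
  have hM : 0 ≤ M := (norm_nonneg _).trans (hA 0)
  have hAb : ∀ p i, ‖A p (b i)‖ ≤ M * ∑ j, ‖b j‖ := fun p i =>
    ((A p).le_opNorm (b i)).trans (mul_le_mul (hA p)
      (Finset.single_le_sum (fun j _ => norm_nonneg (b j)) (Finset.mem_univ i)) (norm_nonneg _) hM)
  obtain ⟨B, hBI, hB, hclose⟩ :=
    hcat.exists_infinite_pairwise_close (div_pos hδ (mul_pos two_pos hK)) _ hAb hI
  refine ⟨B, hBI, hB, fun q hq q' hq' => ?_⟩
  obtain ⟨U, hU⟩ := hclose q hq q' hq'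
  refine ⟨U, (hbasis (div_pos hδ (mul_pos two_pos hK)).le fun i => (hU i).le).trans_lt ?_⟩
  calc K * (δ / (2 * K)) = δ / 2 := by field_simp
    _ < δ := half_lt_self hδ

theorem exists_strictMono_close (hcat : OmegaCategorical X) {E : Type*}
    [NormedAddCommGroup E] [NormedSpace ℝ E] [FiniteDimensional ℝ E] {M : ℝ} (A : ℕ → E →L[ℝ] X)
    (hA : ∀ p, ‖A p‖ ≤ M) {δ : ℕ → ℝ} (hδ : ∀ p, 0 < δ p) :
    ∃ φ : ℕ → ℕ, StrictMono φ ∧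
      ∀ p, ∃ U : X ≃ₗᵢ[ℝ] X, ‖A (φ p) - (toCLM U).comp (A (φ (p + 1)))‖ < δ p := by
  choose next hsub hinf hclose using fun (s : {s : Set ℕ // s.Infinite}) (p : ℕ) =>
    hcat.exists_infinite_pairwise_close_clm (hδ p) A hA s.2
  let B : ℕ → {s : Set ℕ // s.Infinite} := fun p =>
    Nat.rec ⟨Set.univ, Set.infinite_univ⟩ (fun p s => ⟨next s p, hinf s p⟩) p
  -- `φ p` and `φ (p + 1)` both lie in `B (p + 1)`, whose elements are pairwise `δ p`-close.
  obtain ⟨φ, hφ, hφB⟩ := extraction_forall_of_frequently (P := fun p k => k ∈ (B (p + 1)).1)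
    fun p => Nat.frequently_atTop_iff_infinite.2 (B (p + 1)).2
  exact ⟨φ, hφ, fun p => hclose (B p) p _ (hφB p) _ (hsub _ _ (hφB (p + 1)))⟩

end OmegaCategorical

theorem exists_isIsomEmb_of_finRep {X : Type*} [NormedAddCommGroup X] [NormedSpace ℝ X]
    [CompleteSpace X] (hcat : OmegaCategorical X) {F : FinNormedSpace} (hF : FinRep F X) :
    ∃ V : F →L[ℝ] X, IsIsomEmb V := by
  choose T hT using fun p : ℕ => hF ((1 / 2) ^ p) (by positivity)
  have hTle : ∀ p, ‖T p‖ ≤ Real.exp 1 := fun p =>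
    (hT p).opNorm_le.trans (Real.exp_le_exp.2 (pow_le_one₀ (by norm_num) (by norm_num)))
  obtain ⟨φ, hφ, hU⟩ := hcat.exists_strictMono_close T hTle (δ := fun p => (1 / 2) ^ p)
    fun p => by positivity
  choose U hU using hU
  let V : ℕ → X ≃ₗᵢ[ℝ] X := fun p =>
    Nat.rec (LinearIsometryEquiv.refl ℝ X) (fun p V => (U p).trans V) p
  let S : ℕ → F →L[ℝ] X := fun p => (toCLM (V p)).comp (T (φ p))
  have hS : ∀ p, dist (S p) (S (p + 1)) ≤ 1 * (1 / 2) ^ p := fun p => by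
    have : S (p + 1) = (toCLM (V p)).comp ((toCLM (U p)).comp (T (φ (p + 1)))) := rfl
    rw [this, dist_eq_norm, ← ContinuousLinearMap.comp_sub, (isIsomEmb_toCLM _).norm_comp,
      one_mul]
    exact (hU p).le
  obtain ⟨L, hlim⟩ :=
    cauchySeq_tendsto_of_complete (cauchySeq_of_le_geometric _ 1 (by norm_num) hS)
  refine ⟨L, isIsomEmb_of_tendsto (fun p => (hT (φ p)).isIsomEmb_comp (isIsomEmb_toCLM _)) ?_ hlim⟩
  exact (tendsto_pow_atTop_nhds_zero_of_lt_one (by norm_num) (by norm_num)).comp hφ.tendsto_atTop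

theorem omegaCategorical_omegaAmalgamation_general (X : Type*) [NormedAddCommGroup X]
    [NormedSpace ℝ X] [CompleteSpace X]
    (hcat : OmegaCategorical X)
    (E : FinNormedSpace)
    (C ε : ℝ) (hε : 0 < ε)
    (F : ℕ → FinNormedSpace) (hF : ∀ n, FinRep (F n) X)
    (f : ∀ n, E.carrier →L[ℝ] (F n).carrier) (hf : ∀ n, IsEmbC C (f n)) :
    ∃ n m, n ≠ m ∧ ∃ (G : FinNormedSpace), FinRep G X ∧
      ∃ (gn : (F n).carrier →L[ℝ] G.carrier) (gm : (F m).carrier →L[ℝ] G.carrier),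
        IsIsomEmb gn ∧ IsIsomEmb gm ∧ ‖gn.comp (f n) - gm.comp (f m)‖ < ε := by
  choose V hV using fun n => exists_isIsomEmb_of_finRep hcat (hF n)
  have hW : ∀ n, ‖(V n).comp (f n)‖ ≤ Real.exp C := fun n =>
    ((hf n).isIsomEmb_comp (hV n)).opNorm_le
  obtain ⟨B, -, hB, hclose⟩ := hcat.exists_infinite_pairwise_close_clm hε _ hW Set.infinite_univ
  obtain ⟨n, hn, m, hm, hnm⟩ := hB.nontrivial
  obtain ⟨U, hU⟩ := hclose n hn m hm
  obtain ⟨G, ι, gn, gm, hι, hgn, hgm⟩ := exists_finNormedSpace_factor (V n) ((toCLM U).comp (V m))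
  refine ⟨n, m, hnm, G, fun δ hδ => ⟨ι, hι.isEmbC hδ.le⟩, gn, gm, hι.of_comp (hgn ▸ hV n),
    hι.of_comp (hgm ▸ (isIsomEmb_toCLM U).comp (hV m)), ?_⟩
  rwa [← hι.norm_comp, ContinuousLinearMap.comp_sub, ← ContinuousLinearMap.comp_assoc,
    ← ContinuousLinearMap.comp_assoc, hgn, hgm, ContinuousLinearMap.comp_assoc]

/-- The closed age of an infinite-dimensional ω-categorical separable Banach
space has the ω-amalgamation property. -/
theorem omegaCategorical_omegaAmalgamation (X : Type*) [NormedAddCommGroup X]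
    [NormedSpace ℝ X] [CompleteSpace X] [TopologicalSpace.SeparableSpace X]
    (hinf : ¬ FiniteDimensional ℝ X) (hcat : OmegaCategorical X)
    (E : FinNormedSpace) (hE : FinRep E X)
    (C ε : ℝ) (hC : 0 < C) (hε : 0 < ε)
    (F : ℕ → FinNormedSpace) (hF : ∀ n, FinRep (F n) X)
    (f : ∀ n, E.carrier →L[ℝ] (F n).carrier) (hf : ∀ n, IsEmbC C (f n)) :
    ∃ n m, n ≠ m ∧ ∃ (G : FinNormedSpace), FinRep G X ∧
      ∃ (gn : (F n).carrier →L[ℝ] G.carrier) (gm : (F m).carrier →L[ℝ] G.carrier),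
        IsIsomEmb gn ∧ IsIsomEmb gm ∧ ‖gn.comp (f n) - gm.comp (f m)‖ < ε :=
  omegaCategorical_omegaAmalgamation_general X hcat E C ε hε F hF f hf
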